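/- Let C = ⟨a(x), ωb(x)⟩ be a cyclic code of odd length n over R_{2+2ω}. If the all-(2+2ω) word (2+2ω)(1 + x + … + x^{n−1}) belongs to C and both a(x) and b(x) are self-reciprocal, then C is reverse-complement closed. -/

import Mathlib

/-!
Let `ρ` be the ring endomorphism of `R[x]/(xⁿ − 1)` sending `x` to `x⁻¹ = xⁿ⁻¹`. For `f` of degree
at most `N`, `ρ(f) · x^N = x^N f(1/x)` is the reflection of `f` in degree `N`.
For a self-reciprocal generator `g` the reflection is a unit multiple of `g`, so `ρ` maps the code
into itself. The reversed word of `c` is the reflection of `c` in degree `n − 1`, i.e.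
`x^(n−1) ρ(c)`, hence lies in the code, and adding the all-`(2+2ω)` word complements it.
-/

open Polynomial

/-- The ring `Z₄[ω]` with `ω² = a + bω`, i.e. `Z₄[X]/(X² − (a + bX))`. -/
abbrev Rring (a b : ZMod 4) := AdjoinRoot ((X : (ZMod 4)[X]) ^ 2 - (C a + C b * X))

/-- The element `ω` of `Rring a b`. -/
noncomputable abbrev w (a b : ZMod 4) : Rring a b := AdjoinRoot.root _

/-- The quotient ring `R_{2+2ω}[x]/(xⁿ − 1)` in which cyclic codes of length `n` live. -/
noncomputable abbrev quotMk (n : ℕ) :=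
  Ideal.Quotient.mk (Ideal.span {(X : (Rring 2 2)[X]) ^ n - 1})

/-- The cyclic code `⟨a(x), ωb(x)⟩ ⊆ R_{2+2ω}[x]/(xⁿ−1)`, where `a, b ∈ Z₄[x]`. -/
noncomputable def codeIdeal (n : ℕ) (a b : (ZMod 4)[X]) :
    Ideal ((Rring 2 2)[X] ⧸ Ideal.span {(X : (Rring 2 2)[X]) ^ n - 1}) :=
  Ideal.span
    { quotMk n (a.map (algebraMap (ZMod 4) (Rring 2 2))),
      quotMk n (C (w 2 2) * b.map (algebraMap (ZMod 4) (Rring 2 2))) }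

/-- Membership of a word `(c₀, …, c_{n−1})` in the cyclic code:
its associated polynomial `∑ cᵢ xⁱ` lies in the ideal. -/
noncomputable def memCode (n : ℕ) (a b : (ZMod 4)[X]) (c : Fin n → Rring 2 2) : Prop :=
  quotMk n (∑ i : Fin n, C (c i) * X ^ (i : ℕ)) ∈ codeIdeal n a b

/-- A polynomial over `Z₄` is self-reciprocal if `g* = v·g` for some unit `v ∈ Z₄`. -/
def SelfReciprocal (g : (ZMod 4)[X]) : Prop :=
  ∃ v : (ZMod 4)ˣ, g.reverse = C (v : ZMod 4) * g

theorem Polynomial.reflect_sum_fin_rev {R : Type*} [Semiring R] {n : ℕ} (c : Fin n → R) :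
    reflect (n - 1) (∑ i : Fin n, C (c i) * X ^ (i : ℕ)) =
      ∑ i : Fin n, C (c i.rev) * X ^ (i : ℕ) := by
  let reflectHom : R[X] →+ R[X] :=
    { toFun := reflect (n - 1), map_zero' := reflect_zero, map_add' := (reflect_add · · _) }
  change reflectHom (∑ i : Fin n, C (c i) * X ^ (i : ℕ)) = _
  rw [map_sum]
  refine Fintype.sum_equiv Fin.revPerm _ _ fun i => ?_
  change reflect (n - 1) (C (c i) * X ^ (i : ℕ)) = _
  rw [reflect_C_mul_X_pow, revAt_le (Nat.le_sub_one_of_lt i.isLt), Fin.revPerm_apply, Fin.rev_rev,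
    Fin.val_rev, Nat.sub_sub, Nat.add_comm]

theorem Polynomial.natDegree_sum_fin_le {R : Type*} [Semiring R] {n : ℕ} (c : Fin n → R) :
    (∑ i : Fin n, C (c i) * X ^ (i : ℕ)).natDegree ≤ n - 1 :=
  natDegree_sum_le_of_forall_le _ _ fun i _ =>
    natDegree_C_mul_X_pow_le _ _ |>.trans (Nat.le_sub_one_of_lt i.isLt)

namespace CyclicReverse

variable {R : Type*} [CommRing R] {n : ℕ}

local notation "mk" => Ideal.Quotient.mk (Ideal.span {(X : R[X]) ^ n - 1})

theorem mk_X_pow_eq_one : mk X ^ n = 1 := by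
  rw [← map_pow, ← sub_eq_zero, ← map_one mk, ← map_sub, Ideal.Quotient.eq_zero_iff_mem]
  exact Ideal.subset_span rfl

variable (n) in
/-- `x ↦ xⁿ⁻¹`, which is `x ↦ x⁻¹` as soon as `n > 0`. -/
noncomputable def reverseHom :
    R[X] ⧸ Ideal.span {(X : R[X]) ^ n - 1} →+* R[X] ⧸ Ideal.span {(X : R[X]) ^ n - 1} :=
  Ideal.Quotient.lift _ (eval₂RingHom ((mk).comp C) (mk X ^ (n - 1))) fun f hf => by
    obtain ⟨g, rfl⟩ := Ideal.mem_span_singleton'.mp hf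
    rw [map_mul, coe_eval₂RingHom, eval₂_sub, eval₂_X_pow, eval₂_one, ← pow_mul, mul_comm (n - 1),
      pow_mul, mk_X_pow_eq_one, one_pow, sub_self, mul_zero]

theorem reverseHom_mk (f : R[X]) :
    reverseHom n (mk f) = eval₂ ((mk).comp C) (mk X ^ (n - 1)) f :=
  Ideal.Quotient.lift_mk _ _ _

theorem reverseHom_mk_mul_X_pow (hn : 0 < n) {f : R[X]} {N : ℕ} (hf : f.natDegree ≤ N) :
    reverseHom n (mk f) * mk X ^ N = mk (reflect N f) := by
  let _ : Invertible (mk X) :=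
    { invOf := mk X ^ (n - 1)
      invOf_mul_self := by rw [← pow_succ, Nat.sub_add_cancel hn, mk_X_pow_eq_one]
      mul_invOf_self := by rw [← pow_succ', Nat.sub_add_cancel hn, mk_X_pow_eq_one] }
  have h := eval₂_reflect_mul_pow ((mk).comp C) (mk X) N (reflect N f)
    (natDegree_reflect_le.trans (max_le le_rfl hf))
  rw [reflect_reflect, ← hom_eval₂, eval₂_C_X] at h
  rwa [reverseHom_mk]

theorem reverseHom_mk_mem_of_reflect_eq (hn : 0 < n)
    {I : Ideal (R[X] ⧸ Ideal.span {(X : R[X]) ^ n - 1})} {f : R[X]} {N : ℕ}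
    (hf : f.natDegree ≤ N) {u : R} (hu : reflect N f = C u * f) (hfI : mk f ∈ I) :
    reverseHom n (mk f) ∈ I := by
  have hX : IsUnit (mk X ^ N) := (IsUnit.of_pow_eq_one mk_X_pow_eq_one hn.ne').pow N
  rw [← I.mul_unit_mem_iff_mem hX, reverseHom_mk_mul_X_pow hn hf, hu, map_mul]
  exact I.mul_mem_left _ hfI

end CyclicReverse

theorem SelfReciprocal.reflect_map {g : (ZMod 4)[X]} (hg : SelfReciprocal g) {S : Type*}
    [Semiring S] (σ : ZMod 4 →+* S) : ∃ u : S, reflect g.natDegree (g.map σ) = C u * g.map σ := by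
  obtain ⟨v, hv⟩ := hg
  exact ⟨σ v, by rw [Polynomial.reflect_map, ← reverse, hv, Polynomial.map_mul, map_C]⟩

open CyclicReverse

theorem reverseHom_mem_codeIdeal {n : ℕ} (hn : 0 < n) {a b : (ZMod 4)[X]}
    (hsa : SelfReciprocal a) (hsb : SelfReciprocal b) {y} (hy : y ∈ codeIdeal n a b) :
    reverseHom n y ∈ codeIdeal n a b := by
  suffices Ideal.map (reverseHom n) (codeIdeal n a b) ≤ codeIdeal n a b from
    this (Ideal.mem_map_of_mem _ hy)
  rw [codeIdeal, Ideal.map_span, Ideal.span_le]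
  rintro _ ⟨f, rfl | rfl, rfl⟩
  · obtain ⟨u, hu⟩ := hsa.reflect_map (algebraMap (ZMod 4) (Rring 2 2))
    exact reverseHom_mk_mem_of_reflect_eq hn natDegree_map_le hu (Ideal.subset_span (.inl rfl))
  · obtain ⟨u, hu⟩ := hsb.reflect_map (algebraMap (ZMod 4) (Rring 2 2))
    refine reverseHom_mk_mem_of_reflect_eq hn (natDegree_C_mul_le _ _ |>.trans natDegree_map_le)
      (u := u) ?_ (Ideal.subset_span (.inr rfl))
    rw [reflect_C_mul, hu, mul_left_comm]

theorem memCode_add {n : ℕ} {a b : (ZMod 4)[X]} {c d : Fin n → Rring 2 2}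
    (hc : memCode n a b c) (hd : memCode n a b d) : memCode n a b (c + d) := by
  simpa only [memCode, Pi.add_apply, C_add, add_mul, Finset.sum_add_distrib, map_add]
    using add_mem hc hd

theorem memCode_comp_rev {n : ℕ} (hn : 0 < n) {a b : (ZMod 4)[X]}
    (hsa : SelfReciprocal a) (hsb : SelfReciprocal b) {c : Fin n → Rring 2 2}
    (hc : memCode n a b c) : memCode n a b (fun i => c i.rev) := by
  rw [memCode, ← reflect_sum_fin_rev, ← reverseHom_mk_mul_X_pow hn (natDegree_sum_fin_le c)]
  exact Ideal.mul_mem_right _ _ (reverseHom_mem_codeIdeal hn hsa hsb hc)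

theorem stmt9 (n : ℕ) (hodd : Odd n) (a b : (ZMod 4)[X])
    (hconst : memCode n a b (fun _ => 2 + 2 * w 2 2))
    (hsa : SelfReciprocal a) (hsb : SelfReciprocal b) :
    ∀ c : Fin n → Rring 2 2, memCode n a b c →
      memCode n a b (fun i => c (Fin.rev i) + (2 + 2 * w 2 2)) := by
  intro c hc
  exact memCode_add (memCode_comp_rev hodd.pos hsa hsb hc) hconst
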